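/- Let 0 < ρ ≤ 1, 0 < δ ≤ 1, β ≥ 0, set c₁ = γρ/2, c₂ = δ/2 and γ = ρδ/(16ρ + ρ² + 4β² + 2ρβ² − 8ρδ). If β ≤ 2 and the denominator is positive, then γ ∈ (0,1], and with α = ρ²δ/82 we have (1+c₁)(1−γρ)² + (1−δ)γ²β²(1+1/c₂) ≤ 1 − α and (1+1/c₁)γ²β² + (1−δ)(1+c₂)(1+γβ)² ≤ 1 − α... in particular α ≤ 1. -/

import Mathlib

set_option maxHeartbeats 1000000


/-- Parameter inequalities making the joint consensus-plus-compression error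
recursion a contraction with factor `1 - α`, `α = ρ²δ/82`. -/
theorem stmt_18 (ρ δ β γ c₁ c₂ α : ℝ)
    (hρ0 : 0 < ρ) (hρ1 : ρ ≤ 1) (hδ0 : 0 < δ) (hδ1 : δ ≤ 1)
    (hβ0 : 0 ≤ β) (hβ2 : β ≤ 2)
    (hden : 0 < 16 * ρ + ρ ^ 2 + 4 * β ^ 2 + 2 * ρ * β ^ 2 - 8 * ρ * δ)
    (hγ : γ = ρ * δ / (16 * ρ + ρ ^ 2 + 4 * β ^ 2 + 2 * ρ * β ^ 2 - 8 * ρ * δ))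
    (hc₁ : c₁ = γ * ρ / 2) (hc₂ : c₂ = δ / 2) (hα : α = ρ ^ 2 * δ / 82) :
    (0 < γ ∧ γ ≤ 1) ∧
    (1 + c₁) * (1 - γ * ρ) ^ 2 + (1 - δ) * γ ^ 2 * β ^ 2 * (1 + 1 / c₂) ≤ 1 - α ∧
    (1 + 1 / c₁) * γ ^ 2 * β ^ 2 + (1 - δ) * (1 + c₂) * (1 + γ * β) ^ 2 ≤ 1 - α ∧
    α ≤ 1 := by
  subst hc₁ hc₂ hα
  have hγpos : 0 < γ := by
    rw [hγ]; exact div_pos (mul_pos hρ0 hδ0) hden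
  have hγD : γ * (16 * ρ + ρ ^ 2 + 4 * β ^ 2 + 2 * ρ * β ^ 2 - 8 * ρ * δ) = ρ * δ := by
    rw [hγ]; exact div_mul_cancel₀ _ hden.ne'
  have hDle : 16 * ρ + ρ ^ 2 + 4 * β ^ 2 + 2 * ρ * β ^ 2 - 8 * ρ * δ ≤ 41 := by
    nlinarith [sq_nonneg β, mul_pos hρ0 hδ0]
  have hDge : 8 * ρ + 4 * β ^ 2 ≤ 16 * ρ + ρ ^ 2 + 4 * β ^ 2 + 2 * ρ * β ^ 2 - 8 * ρ * δ := by
    nlinarith [mul_nonneg hρ0.le (sq_nonneg β)]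
  have hmul := mul_le_mul_of_nonneg_left hDge hγpos.le
  rw [hγD] at hmul
  -- hmul : γ * (8ρ + 4β²) ≤ ρδ
  have hγβ2 : γ * β ^ 2 ≤ ρ * δ / 4 := by nlinarith [mul_pos hγpos hρ0]
  have h8 : γ ≤ δ / 8 := by
    have h1 : γ * (8 * ρ) ≤ ρ * δ := by nlinarith [mul_nonneg hγpos.le (sq_nonneg β)]
    nlinarith [mul_pos hρ0 hγpos]
  have hγ41 : ρ * δ ≤ 41 * γ := by
    calc ρ * δ = γ * (16 * ρ + ρ ^ 2 + 4 * β ^ 2 + 2 * ρ * β ^ 2 - 8 * ρ * δ) := hγD.symm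
    _ ≤ γ * 41 := mul_le_mul_of_nonneg_left hDle hγpos.le
    _ = 41 * γ := by ring
  have hγ1 : γ ≤ 1 := by linarith
  have hρδ1 : ρ * δ ≤ 1 := by nlinarith
  have hγρ8 : γ * ρ ≤ 1 / 8 := by nlinarith
  have hγρpos : 0 < γ * ρ := mul_pos hγpos hρ0
  have hu : (0:ℝ) ≤ γ ^ 2 * ρ := by positivity
  refine ⟨⟨hγpos, hγ1⟩, ?_, ?_, ?_⟩
  · -- first contraction inequality
    have hrw : (1 + γ * ρ / 2) * (1 - γ * ρ) ^ 2 + (1 - δ) * γ ^ 2 * β ^ 2 * (1 + 1 / (δ / 2))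
        = ((1 + γ * ρ / 2) * (1 - γ * ρ) ^ 2 * δ + (1 - δ) * γ ^ 2 * β ^ 2 * (δ + 2)) / δ := by
      field_simp
    rw [hrw, div_le_iff₀ hδ0]
    have t1 : (1 - δ) * γ ^ 2 * β ^ 2 * (δ + 2) ≤ γ * ρ * δ / 2 := by
      nlinarith [mul_nonneg hγpos.le (sub_nonneg.2 hγβ2),
        mul_nonneg hδ0.le (sq_nonneg (γ * β)),
        mul_nonneg (mul_nonneg hδ0.le hδ0.le) (sq_nonneg (γ * β))]
    have hsq : (γ * ρ) ^ 2 ≤ 1 / 64 := by nlinarith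
    have t2 : (γ * ρ) ^ 3 * δ ≤ γ * ρ * δ / 64 := by
      nlinarith [mul_nonneg (mul_nonneg hγρpos.le hδ0.le) (sub_nonneg.2 hsq)]
    have t3 : ρ ^ 2 * δ ^ 2 / 82 ≤ γ * ρ * δ / 2 := by
      nlinarith [mul_le_mul_of_nonneg_left hγ41 (mul_nonneg hρ0.le hδ0.le)]
    nlinarith [t1, t2, t3, mul_pos hγρpos hδ0]
  · -- second contraction inequality
    have hrw : (1 + 1 / (γ * ρ / 2)) * γ ^ 2 * β ^ 2 + (1 - δ) * (1 + δ / 2) * (1 + γ * β) ^ 2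
        = ((γ * ρ + 2) * γ ^ 2 * β ^ 2 + (1 - δ) * (1 + δ / 2) * (1 + γ * β) ^ 2 * (γ * ρ))
          / (γ * ρ) := by
      rw [eq_div_iff hγρpos.ne']
      field_simp
    rw [hrw, div_le_iff₀ hγρpos]
    have s0 : 16 * γ ^ 2 * ρ + γ ^ 2 * ρ ^ 2 + 4 * γ ^ 2 * β ^ 2 + 2 * γ ^ 2 * ρ * β ^ 2
        - 8 * γ ^ 2 * ρ * δ = γ * (ρ * δ) := by linear_combination γ * hγD
    have s1 : γ * ρ ^ 3 * δ / 82 ≤ γ ^ 2 * ρ / 2 := by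
      nlinarith [mul_le_mul_of_nonneg_left hγ41
          (mul_nonneg hγpos.le (mul_nonneg hρ0.le hρ0.le)),
        mul_nonneg (mul_nonneg (mul_nonneg hγpos.le hγpos.le) hρ0.le) (sub_nonneg.2 hρ1)]
    have s2 : γ ^ 2 * ρ * ((1 - δ / 2 - δ ^ 2 / 2) * (2 * β)) ≤ γ ^ 2 * ρ * (β ^ 2 + 1) := by
      nlinarith [mul_nonneg hu (sq_nonneg (β - 1)),
        mul_nonneg (mul_nonneg hu hβ0) (mul_nonneg hδ0.le (by linarith : (0:ℝ) ≤ 1 + δ))]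
    have s3 : γ ^ 2 * ρ * ((2 - δ / 2 - δ ^ 2 / 2) * (γ * β ^ 2)) ≤ γ ^ 2 * ρ / 2 := by
      nlinarith [mul_nonneg hu (sub_nonneg.2 hγβ2),
        mul_nonneg hu (sub_nonneg.2 hρδ1),
        mul_nonneg (mul_nonneg hu (mul_nonneg hγpos.le (sq_nonneg β)))
          (mul_nonneg hδ0.le (by linarith : (0:ℝ) ≤ 1 + δ))]
    nlinarith [s0, s1, s2, s3, mul_nonneg (mul_nonneg hγρpos.le hδ0.le) hδ0.le,
      mul_nonneg hu (sub_nonneg.2 hδ1), mul_nonneg hu hρ0.le, hu]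
  · -- α ≤ 1
    nlinarith [mul_pos (mul_pos hρ0 hρ0) hδ0]
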